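/- arXiv:1803.03466 — 7 statements merged into one kernel-verified Lean document; each statement's English description precedes it below -/
import Mathlib

section
/- Let $(Y_k)_{k\ge 0}$ be a sequence in $\{0,1\}$, let $a_0 \ge 0$, $\eta \in (0,1)$, let $(\nu_k)$ be a nonnegative summable sequence, $(\varepsilon_k)$ a nonnegative sequence, and define $a_{k+1} := (\eta + \nu_k)^{Y_k} a_k + Y_k \varepsilon_k$. Then for all $k \ge 0$, $a_{k+1} \le C_\nu (a_0 + \sum_{j=0}^{\infty} \varepsilon_j)$, where $C_\nu := \exp(\eta^{-1}\sum_{i=0}^\infty \nu_i)$ (assuming $\sum \varepsilon_j < \infty$). -/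
/-- uniform bound on the recursively defined sequence
`a (k+1) = (η + ν k)^(Y k) * a k + Y k * ε k`. -/
theorem stmt0 (Y : ℕ → ℝ) (hY : ∀ k, Y k = 0 ∨ Y k = 1)
    (a ν ε : ℕ → ℝ) (η : ℝ) (hη0 : 0 < η) (hη1 : η < 1)
    (ha0 : 0 ≤ a 0)
    (hν : ∀ k, 0 ≤ ν k) (hνsum : Summable ν)
    (hε : ∀ k, 0 ≤ ε k) (hεsum : Summable ε)
    (hrec : ∀ k, a (k + 1) = (if Y k = 1 then η + ν k else 1) * a k + Y k * ε k) :
    ∀ k, a (k + 1) ≤ Real.exp (η⁻¹ * ∑' i, ν i) * (a 0 + ∑' j, ε j) := by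
  have hηinv : (1:ℝ) ≤ η⁻¹ := by
    rw [le_inv_comm₀ one_pos hη0]
    simpa using hη1.le
  have hc : ∀ k, (if Y k = 1 then η + ν k else 1) ≤ 1 + ν k := by
    intro k; split <;> [skip; skip] <;> linarith [hν k]
  have hc0 : ∀ k, 0 ≤ (if Y k = 1 then η + ν k else 1) := by
    intro k; split
    · linarith [hν k]
    · norm_num
  have hYe : ∀ k, 0 ≤ Y k * ε k ∧ Y k * ε k ≤ ε k := by
    intro k; rcases hY k with h | h <;> simp [h, hε k]
  have hanonneg : ∀ k, 0 ≤ a k := by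
    intro k; induction k with
    | zero => exact ha0
    | succ n ih =>
      rw [hrec n]
      exact add_nonneg (mul_nonneg (hc0 n) ih) (hYe n).1
  have hstep : ∀ k, a (k+1) ≤ (1 + ν k) * a k + ε k := by
    intro k; rw [hrec k]
    exact add_le_add (mul_le_mul_of_nonneg_right (hc k) (hanonneg k)) (hYe k).2
  have hexp1 : ∀ x : ℝ, 0 ≤ x → 1 + x ≤ Real.exp (η⁻¹ * x) := by
    intro x hx
    have h1 : 1 + x ≤ 1 + η⁻¹ * x := by nlinarith
    have h2 := Real.add_one_le_exp (η⁻¹ * x)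
    linarith
  set E : ℕ → ℝ := fun k => Real.exp (η⁻¹ * ∑ i ∈ Finset.range k, ν i) with hE
  have hE1 : ∀ k, 1 ≤ E k := by
    intro k
    have h0 : 0 ≤ η⁻¹ * ∑ i ∈ Finset.range k, ν i :=
      mul_nonneg (by linarith) (Finset.sum_nonneg fun i _ => hν i)
    have := Real.exp_le_exp.2 h0
    rwa [Real.exp_zero] at this
  have hEsucc : ∀ k, E (k+1) = E k * Real.exp (η⁻¹ * ν k) := by
    intro k
    simp only [hE, Finset.sum_range_succ, mul_add, Real.exp_add]
  have key : ∀ k, a (k+1) ≤ E (k+1) * (a 0 + ∑ j ∈ Finset.range (k+1), ε j) := by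
    intro k; induction k with
    | zero =>
      have h1 := hstep 0
      have h2 := hexp1 (ν 0) (hν 0)
      have h3 : 1 ≤ Real.exp (η⁻¹ * ν 0) := by
        have := Real.exp_le_exp.2 (mul_nonneg (by linarith : (0:ℝ) ≤ η⁻¹) (hν 0))
        rwa [Real.exp_zero] at this
      have hA : (1 + ν 0) * a 0 ≤ Real.exp (η⁻¹ * ν 0) * a 0 :=
        mul_le_mul_of_nonneg_right h2 ha0
      have hB : ε 0 ≤ Real.exp (η⁻¹ * ν 0) * ε 0 := le_mul_of_one_le_left (hε 0) h3
      simp only [hE, zero_add, Finset.sum_range_one, mul_add]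
      linarith
    | succ n ih =>
      have h1 := hstep (n+1)
      have h2 := hexp1 (ν (n+1)) (hν (n+1))
      have hS0 : 0 ≤ a 0 + ∑ j ∈ Finset.range (n+1), ε j :=
        add_nonneg ha0 (Finset.sum_nonneg fun i _ => hε i)
      have hE1n := hE1 (n+1)
      have hnn := hν (n+1)
      have hen := hε (n+1)
      rw [hEsucc (n+1), Finset.sum_range_succ]
      set S := a 0 + ∑ j ∈ Finset.range (n+1), ε j with hS
      have h4 : (1 + ν (n+1)) * a (n+1) ≤ (1 + ν (n+1)) * (E (n+1) * S) :=
        mul_le_mul_of_nonneg_left ih (by linarith)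
      have h5 : (1 + ν (n+1)) * (E (n+1) * S) ≤ Real.exp (η⁻¹ * ν (n+1)) * (E (n+1) * S) :=
        mul_le_mul_of_nonneg_right h2 (mul_nonneg (by linarith) hS0)
      have hF1 : 1 ≤ Real.exp (η⁻¹ * ν (n+1)) := by
        have := Real.exp_le_exp.2 (mul_nonneg (by linarith : (0:ℝ) ≤ η⁻¹) (hν (n+1)))
        rwa [Real.exp_zero] at this
      have h7 : 1 ≤ E (n+1) * Real.exp (η⁻¹ * ν (n+1)) := by nlinarith
      have h6 : ε (n+1) ≤ E (n+1) * Real.exp (η⁻¹ * ν (n+1)) * ε (n+1) :=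
        le_mul_of_one_le_left hen h7
      have hgoal : E (n+1) * Real.exp (η⁻¹ * ν (n+1)) * (a 0 + (∑ j ∈ Finset.range (n+1), ε j + ε (n+1)))
          = Real.exp (η⁻¹ * ν (n+1)) * (E (n+1) * S) + E (n+1) * Real.exp (η⁻¹ * ν (n+1)) * ε (n+1) := by
        rw [hS]; ring
      rw [hgoal]
      exact h1.trans (add_le_add (h4.trans h5) h6)
  intro k
  have h1 := key k
  have h2 : E (k+1) ≤ Real.exp (η⁻¹ * ∑' i, ν i) := by
    apply Real.exp_le_exp.2
    exact mul_le_mul_of_nonneg_left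
      (Summable.sum_le_tsum (Finset.range (k+1)) (fun i _ => hν i) hνsum) (by linarith)
  have h3 : a 0 + ∑ j ∈ Finset.range (k+1), ε j ≤ a 0 + ∑' j, ε j := by
    have := Summable.sum_le_tsum (Finset.range (k+1)) (fun i _ => hε i) hεsum
    linarith
  have hS0 : 0 ≤ a 0 + ∑ j ∈ Finset.range (k+1), ε j :=
    add_nonneg ha0 (Finset.sum_nonneg fun i _ => hε i)
  calc a (k+1) ≤ E (k+1) * (a 0 + ∑ j ∈ Finset.range (k+1), ε j) := h1
    _ ≤ Real.exp (η⁻¹ * ∑' i, ν i) * (a 0 + ∑' j, ε j) :=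
      mul_le_mul h2 h3 hS0 (Real.exp_pos _).le
end

section
/- Let $(Y_k)_{k\ge 0}$ be a sequence in $\{0,1\}$, $a_0 \ge 0$, $\eta \in (0,1)$, $p \in (0,1]$, $(\nu_k) \in \ell^1_+$, $(\varepsilon_k) \in \ell^p_+$, and define $a_{k+1} := (\eta + \nu_k)^{Y_k} a_k + Y_k \varepsilon_k$. Then for every $R \ge 1$ and every $q \in [p,1]$, $\sum_{k=0}^{R-1} Y_k a_{k+1}^q \le \frac{C_\nu^q}{1-\eta^q}\big[(\eta a_0)^q + \sum_{k=0}^\infty \varepsilon_k^q\big]$, where $C_\nu := \exp(\eta^{-1}\sum_{i=0}^\infty \nu_i)$. -/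
/-!
Divide `a k` by the growth factor `G k = ∏_{i<k, Y i = 1} (1 + ν i / η)`, which is at most
`C_ν = exp (η⁻¹ ∑ ν)` since `1 + x ≤ exp x`. The normalized sequence `c = a / G` is constant
when `Y k = 0` and satisfies the pure contraction `c (k+1) ≤ η c k + ε k` when `Y k = 1`.
As `t ↦ t ^ q` is subadditive for `q ≤ 1`, `b = c ^ q` obeys `b (k+1) ≤ η^q b k + ε k ^ q`, so
`(1 - η^q) Y k b (k+1) + η^q b (k+1) ≤ η^q b k + ε k ^ q` for every `k`, and summing telescopes.
Finally `a (k+1) ^ q ≤ C_ν ^ q b (k+1)`, and `ℓ^p ⊆ ℓ^q` makes `∑ ε k ^ q` finite.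
-/

open Finset

lemma Summable.rpow_of_exponent_le {ι : Type*} {f : ι → ℝ} {p q : ℝ} (hf : ∀ i, 0 ≤ f i)
    (hp : 0 < p) (hpq : p ≤ q) (h : Summable fun i => f i ^ p) : Summable fun i => f i ^ q := by
  have hq : 0 < q := hp.trans_le hpq
  have key : ∀ r : ℝ, 0 < r → (Memℓp f (ENNReal.ofReal r) ↔ Summable fun i => f i ^ r) := by
    intro r hr
    rw [memℓp_gen_iff (by rwa [ENNReal.toReal_ofReal hr.le]), ENNReal.toReal_ofReal hr.le]
    simp only [Real.norm_eq_abs, abs_of_nonneg (hf _)]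
  exact (key q hq).1 (((key p hp).2 h).of_exponent_ge (ENNReal.ofReal_le_ofReal hpq))

lemma sum_range_le_of_add_le_add {d f e : ℕ → ℝ} (h : ∀ k, d k + f (k + 1) ≤ f k + e k)
    (R : ℕ) (hfR : 0 ≤ f R) : ∑ k ∈ range R, d k ≤ f 0 + ∑ k ∈ range R, e k := by
  have hsum := sum_le_sum fun k (_ : k ∈ range R) => h k
  have hshift : ∑ k ∈ range R, f (k + 1) + f 0 = ∑ k ∈ range R, f k + f R := by
    rw [← sum_range_succ', sum_range_succ]
  simp only [sum_add_distrib] at hsum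
  linarith

lemma sub_mul_sum_range_le_of_contract {Y b e : ℕ → ℝ} {β : ℝ} (hY : ∀ k, Y k = 0 ∨ Y k = 1)
    (hβ : 0 ≤ β) (hb : ∀ k, 0 ≤ b k) (he : ∀ k, 0 ≤ e k)
    (hstep : ∀ k, Y k = 1 → b (k + 1) ≤ β * b k + e k) (hstay : ∀ k, Y k = 0 → b (k + 1) = b k)
    (R : ℕ) : (1 - β) * ∑ k ∈ range R, Y k * b (k + 1) ≤ β * b 0 + ∑ k ∈ range R, e k := by
  rw [mul_sum]
  refine sum_range_le_of_add_le_add (f := fun k => β * b k) (fun k => ?_) R (mul_nonneg hβ (hb R))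
  rcases hY k with h | h
  · rw [h, hstay k h]
    linarith [he k]
  · rw [h]
    linarith [hstep k h]

lemma rpow_le_of_le_mul_add {x y η ε q : ℝ} (hx : 0 ≤ x) (hy : 0 ≤ y) (hη : 0 ≤ η) (hε : 0 ≤ ε)
    (hq0 : 0 ≤ q) (hq1 : q ≤ 1) (h : y ≤ η * x + ε) : y ^ q ≤ η ^ q * x ^ q + ε ^ q :=
  calc y ^ q ≤ (η * x + ε) ^ q := Real.rpow_le_rpow hy h hq0
    _ ≤ (η * x) ^ q + ε ^ q :=
      Real.rpow_add_le_add_rpow (mul_nonneg hη hx) hε hq0 hq1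
    _ = η ^ q * x ^ q + ε ^ q := by rw [Real.mul_rpow hη hx]

noncomputable def growthFactor (Y ν : ℕ → ℝ) (η : ℝ) (k : ℕ) : ℝ :=
  ∏ i ∈ range k, if Y i = 1 then 1 + ν i / η else 1

section growthFactor

variable {Y ν : ℕ → ℝ} {η : ℝ}

@[simp] lemma growthFactor_zero : growthFactor Y ν η 0 = 1 := prod_range_zero _

lemma growthFactor_succ (k : ℕ) : growthFactor Y ν η (k + 1) =
    growthFactor Y ν η k * if Y k = 1 then 1 + ν k / η else 1 :=
  prod_range_succ _ k

lemma one_le_growthFactor (hη : 0 ≤ η) (hν : ∀ k, 0 ≤ ν k) (k : ℕ) : 1 ≤ growthFactor Y ν η k :=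
  one_le_prod fun i _ => by
    split_ifs
    · exact le_add_of_nonneg_right (div_nonneg (hν i) hη)
    · exact le_rfl

lemma growthFactor_le_exp (hη : 0 ≤ η) (hν : ∀ k, 0 ≤ ν k) (hνsum : Summable ν) (k : ℕ) :
    growthFactor Y ν η k ≤ Real.exp (η⁻¹ * ∑' i, ν i) :=
  calc growthFactor Y ν η k ≤ ∏ i ∈ range k, (1 + η⁻¹ * ν i) := by
        have hνη : ∀ i, 0 ≤ η⁻¹ * ν i := fun i => mul_nonneg (inv_nonneg.2 hη) (hν i)
        refine prod_le_prod (fun i _ => ?_) fun i _ => ?_ <;> split_ifs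
        · linarith [hνη i, div_eq_inv_mul (ν i) η]
        · exact zero_le_one
        · rw [div_eq_inv_mul]
        · linarith [hνη i]
    _ ≤ Real.exp (∑ i ∈ range k, η⁻¹ * ν i) :=
        Real.prod_one_add_le_exp_sum _ fun i => mul_nonneg (inv_nonneg.2 hη) (hν i)
    _ ≤ Real.exp (η⁻¹ * ∑' i, ν i) := by
        rw [← mul_sum]
        gcongr
        exact hνsum.sum_le_tsum _ fun i _ => hν i

end growthFactor

lemma rpow_le_mul_rpow_div {x g C q : ℝ} (hx : 0 ≤ x) (hg : 0 < g) (hgC : g ≤ C) (hq : 0 ≤ q) :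
    x ^ q ≤ C ^ q * (x / g) ^ q :=
  calc x ^ q = g ^ q * (x / g) ^ q := by
        rw [← Real.mul_rpow hg.le (div_nonneg hx hg.le), mul_div_cancel₀ x hg.ne']
    _ ≤ C ^ q * (x / g) ^ q := by gcongr

section Recursion

variable {Y a ν ε : ℕ → ℝ} {η : ℝ}

lemma nonneg_of_rec (hY : ∀ k, Y k = 0 ∨ Y k = 1) (hη : 0 ≤ η) (hν : ∀ k, 0 ≤ ν k)
    (hε : ∀ k, 0 ≤ ε k) (ha0 : 0 ≤ a 0)
    (hrec : ∀ k, a (k + 1) = (if Y k = 1 then η + ν k else 1) * a k + Y k * ε k) (k : ℕ) :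
    0 ≤ a k := by
  induction k with
  | zero => exact ha0
  | succ k ih =>
    rw [hrec k]
    rcases hY k with h | h <;> simp only [h, if_true, zero_ne_one, if_false] <;>
      nlinarith [hν k, hε k]

lemma div_growthFactor_succ_le (hη : 0 < η) (hν : ∀ k, 0 ≤ ν k) (hε : ∀ k, 0 ≤ ε k)
    (hrec : ∀ k, a (k + 1) = (if Y k = 1 then η + ν k else 1) * a k + Y k * ε k) {k : ℕ}
    (hk : Y k = 1) :
    a (k + 1) / growthFactor Y ν η (k + 1) ≤ η * (a k / growthFactor Y ν η k) + ε k := by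
  have hG := one_le_growthFactor (Y := Y) hη.le hν
  have hsplit : a (k + 1) / growthFactor Y ν η (k + 1) =
      η * (a k / growthFactor Y ν η k) + ε k / growthFactor Y ν η (k + 1) := by
    rw [hrec k, growthFactor_succ, if_pos hk, if_pos hk, hk, one_mul]
    have hGk := (zero_lt_one.trans_le (hG k)).ne'
    have hην : η + ν k ≠ 0 := (add_pos_of_pos_of_nonneg hη (hν k)).ne'
    field_simp
  rw [hsplit]
  gcongr
  exact div_le_self (hε k) (hG _)

lemma div_growthFactor_succ_eq
    (hrec : ∀ k, a (k + 1) = (if Y k = 1 then η + ν k else 1) * a k + Y k * ε k) {k : ℕ}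
    (hk : Y k = 0) : a (k + 1) / growthFactor Y ν η (k + 1) = a k / growthFactor Y ν η k := by
  rw [hrec k, growthFactor_succ, hk, if_neg zero_ne_one]
  simp

lemma one_sub_rpow_mul_sum_le (hY : ∀ k, Y k = 0 ∨ Y k = 1) (hη : 0 < η) {q : ℝ} (hq0 : 0 ≤ q)
    (hq1 : q ≤ 1) (ha0 : 0 ≤ a 0) (hν : ∀ k, 0 ≤ ν k) (hε : ∀ k, 0 ≤ ε k)
    (hrec : ∀ k, a (k + 1) = (if Y k = 1 then η + ν k else 1) * a k + Y k * ε k) (R : ℕ) :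
    (1 - η ^ q) * ∑ k ∈ range R, Y k * (a (k + 1) / growthFactor Y ν η (k + 1)) ^ q ≤
      (η * a 0) ^ q + ∑ k ∈ range R, ε k ^ q := by
  have hc : ∀ k, 0 ≤ a k / growthFactor Y ν η k := fun k =>
    div_nonneg (nonneg_of_rec hY hη.le hν hε ha0 hrec k)
      (zero_le_one.trans (one_le_growthFactor hη.le hν k))
  have h := sub_mul_sum_range_le_of_contract (b := fun k => (a k / growthFactor Y ν η k) ^ q)
    (e := fun k => ε k ^ q) hY (Real.rpow_nonneg hη.le q) (fun k => Real.rpow_nonneg (hc k) q)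
    (fun k => Real.rpow_nonneg (hε k) q)
    (fun k hk => rpow_le_of_le_mul_add (hc k) (hc _) hη.le (hε k) hq0 hq1
      (div_growthFactor_succ_le hη hν hε hrec hk))
    (fun k hk => by simp only [div_growthFactor_succ_eq hrec hk]) R
  rwa [growthFactor_zero, div_one, ← Real.mul_rpow hη.le ha0] at h

end Recursion

theorem stmt1_general (Y : ℕ → ℝ) (hY : ∀ k, Y k = 0 ∨ Y k = 1)
    (a ν ε : ℕ → ℝ) (η p q : ℝ) (hη0 : 0 < η) (hη1 : η < 1)
    (hp0 : 0 < p) (hpq : p ≤ q) (hq1 : q ≤ 1)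
    (ha0 : 0 ≤ a 0)
    (hν : ∀ k, 0 ≤ ν k) (hνsum : Summable ν)
    (hε : ∀ k, 0 ≤ ε k) (hεsum : Summable (fun k => ε k ^ p))
    (hrec : ∀ k, a (k + 1) = (if Y k = 1 then η + ν k else 1) * a k + Y k * ε k)
    (R : ℕ) :
    ∑ k ∈ Finset.range R, Y k * a (k + 1) ^ q ≤
      (Real.exp (η⁻¹ * ∑' i, ν i)) ^ q / (1 - η ^ q) *
        ((η * a 0) ^ q + ∑' k, ε k ^ q) := by
  have hq0 : 0 < q := hp0.trans_le hpq
  have hβ : 0 < 1 - η ^ q := sub_pos.2 (Real.rpow_lt_one hη0.le hη1 hq0)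
  set C := Real.exp (η⁻¹ * ∑' i, ν i)
  set G := growthFactor Y ν η
  have hY0 : ∀ k, 0 ≤ Y k := fun k => by rcases hY k with h | h <;> simp [h]
  have hεR : ∑ k ∈ range R, ε k ^ q ≤ ∑' k, ε k ^ q :=
    (Summable.rpow_of_exponent_le hε hp0 hpq hεsum).sum_le_tsum _
      fun k _ => Real.rpow_nonneg (hε k) q
  calc ∑ k ∈ range R, Y k * a (k + 1) ^ q
      ≤ ∑ k ∈ range R, Y k * (C ^ q * (a (k + 1) / G (k + 1)) ^ q) := by
        gcongr with k
        · exact hY0 k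
        exact rpow_le_mul_rpow_div (nonneg_of_rec hY hη0.le hν hε ha0 hrec _)
          (zero_lt_one.trans_le (one_le_growthFactor hη0.le hν _))
          (growthFactor_le_exp hη0.le hν hνsum _) hq0.le
    _ = C ^ q / (1 - η ^ q) *
          ((1 - η ^ q) * ∑ k ∈ range R, Y k * (a (k + 1) / G (k + 1)) ^ q) := by
        rw [mul_sum, mul_sum]
        refine sum_congr rfl fun k _ => ?_
        field_simp
    _ ≤ C ^ q / (1 - η ^ q) * ((η * a 0) ^ q + ∑' k, ε k ^ q) := by
        gcongr
        exact (one_sub_rpow_mul_sum_le hY hη0 hq0.le hq1 ha0 hν hε hrec R).trans (by linarith)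

/-- bound on the weighted sum `∑_{k<R} Y_k a_{k+1}^q` for the
recursively defined sequence `a (k+1) = (η + ν k)^(Y k) * a k + Y k * ε k`. -/
theorem stmt1 (Y : ℕ → ℝ) (hY : ∀ k, Y k = 0 ∨ Y k = 1)
    (a ν ε : ℕ → ℝ) (η p q : ℝ) (hη0 : 0 < η) (hη1 : η < 1)
    (hp0 : 0 < p) (hp1 : p ≤ 1) (hpq : p ≤ q) (hq1 : q ≤ 1)
    (ha0 : 0 ≤ a 0)
    (hν : ∀ k, 0 ≤ ν k) (hνsum : Summable ν)
    (hε : ∀ k, 0 ≤ ε k) (hεsum : Summable (fun k => ε k ^ p))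
    (hrec : ∀ k, a (k + 1) = (if Y k = 1 then η + ν k else 1) * a k + Y k * ε k)
    (R : ℕ) (hR : 1 ≤ R) :
    ∑ k ∈ Finset.range R, Y k * a (k + 1) ^ q ≤
      (Real.exp (η⁻¹ * ∑' i, ν i)) ^ q / (1 - η ^ q) *
        ((η * a 0) ^ q + ∑' k, ε k ^ q) :=
  stmt1_general Y hY a ν ε η p q hη0 hη1 hp0 hpq hq1 ha0 hν hνsum hε hεsum hrec R
end

section
/- Let $f : \mathbb{R}^n \to \mathbb{R}$ be differentiable with $L$-Lipschitz gradient, let $r$ be convex, lsc, proper, and let $\Lambda$ be symmetric positive definite with $\lambda_M I \succeq \Lambda \succeq \lambda_m I$ ($0 < \lambda_m \le \lambda_M$). Define $F^\Lambda(x) := x - \mathrm{prox}^\Lambda_r(x - \Lambda^{-1}\nabla f(x))$. Then $F^\Lambda$ is Lipschitz continuous on $\mathbb{R}^n$ with modulus $1 + (\lambda_m^{-1}\lambda_M)^{1/2} + L(\lambda_m^{-3}\lambda_M)^{1/2}$. -/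
/-!
For a prox point `p` of `a` (a minimiser of `r + ½‖a - ·‖²_Λ`), comparing `p` with the points
of the segment towards any `y` shows that `Λ (a - p)` is a subgradient of `r` at `p`. Adding the
subgradient inequalities at `p = prox a` and `q = prox b` gives `‖p - q‖²_Λ ≤ ⟪a - b, Λ (p - q)⟫`,
hence `‖p - q‖_Λ ≤ ‖a - b‖_Λ`, and comparing the `Λ`-norm with the Euclidean one costs the factor
`(λ_m⁻¹ λ_M)^(1/2)`. The gradient step `x ↦ x - Λ⁻¹ ∇f(x)` is `(1 + L λ_m⁻¹)`-Lipschitz, and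
`(λ_m⁻³ λ_M)^(1/2) = λ_m⁻¹ (λ_m⁻¹ λ_M)^(1/2)`.
-/

open scoped RealInnerProductSpace
open Filter Topology

theorem EReal.ne_top_of_add_coe_le_add_coe {x y : EReal} {α β : ℝ} (h : x + α ≤ y + β)
    (hy : y ≠ ⊤) : x ≠ ⊤ := by
  rintro rfl
  rw [EReal.top_add_coe] at h
  exact (EReal.add_lt_top hy (EReal.coe_ne_top β)).not_ge h

theorem le_sqrt_inv_mul_mul_of_mul_sq_le {a b x y : ℝ} (ha : 0 < a) (hy : 0 ≤ y)
    (h : a * x ^ 2 ≤ b * y ^ 2) : x ≤ √(a⁻¹ * b) * y := by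
  rw [← Real.sqrt_sq hy, ← Real.sqrt_mul' _ (sq_nonneg y)]
  refine (le_abs_self x).trans (Real.abs_le_sqrt ?_)
  rw [mul_assoc, le_inv_mul_iff₀ ha]
  exact h

section

variable {E : Type*} [NormedAddCommGroup E] [InnerProductSpace ℝ E]

theorem LinearMap.IsSymmetric.inner_sub_smul_map_sub_smul {T : E →L[ℝ] E}
    (hT : (T : E →ₗ[ℝ] E).IsSymmetric) (u v : E) (c : ℝ) :
    ⟪u - c • v, T (u - c • v)⟫ = ⟪u, T u⟫ - 2 * c * ⟪u, T v⟫ + c ^ 2 * ⟪v, T v⟫ := by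
  have hvu : ⟪v, T u⟫ = ⟪u, T v⟫ := by rw [real_inner_comm]; exact hT u v
  simp only [inner_sub_left, inner_sub_right, map_sub, map_smul, real_inner_smul_left,
    real_inner_smul_right, hvu]
  ring

theorem LinearMap.IsSymmetric.inner_map_self_le_of_inner_map_le {T : E →L[ℝ] E}
    (hT : (T : E →ₗ[ℝ] E).IsSymmetric) (hpos : ∀ u, 0 ≤ ⟪u, T u⟫) {d w : E}
    (h : ⟪w, T w⟫ ≤ ⟪d, T w⟫) :
    ⟪w, T w⟫ ≤ ⟪d, T d⟫ := by
  have hdw := hpos (d - (1 : ℝ) • w)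
  rw [hT.inner_sub_smul_map_sub_smul] at hdw
  linarith

theorem mul_norm_le_norm_map {T : E →L[ℝ] E} {c : ℝ} (hlow : ∀ u, c * ‖u‖ ^ 2 ≤ ⟪u, T u⟫)
    (v : E) : c * ‖v‖ ≤ ‖T v‖ := by
  rcases (norm_nonneg v).eq_or_lt with hv | hv
  · simp [← hv]
  · refine le_of_mul_le_mul_right ?_ hv
    nlinarith [hlow v, real_inner_le_norm v (T v)]

theorem norm_sub_map_sub_sub_map_le {S : E →L[ℝ] E} {g : E → E} {c L : ℝ} (hc : 0 ≤ c)
    (hS : ∀ w, ‖S w‖ ≤ c * ‖w‖) (hg : ∀ x y, ‖g x - g y‖ ≤ L * ‖x - y‖) (x y : E) :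
    ‖(x - S (g x)) - (y - S (g y))‖ ≤ (1 + c * L) * ‖x - y‖ :=
  calc ‖(x - S (g x)) - (y - S (g y))‖ = ‖(x - y) - S (g x - g y)‖ := by
        rw [map_sub]; congr 1; abel
    _ ≤ ‖x - y‖ + c * (L * ‖x - y‖) := by
        refine (norm_sub_le _ _).trans ?_
        gcongr
        exact (hS _).trans (by gcongr; exact hg x y)
    _ = (1 + c * L) * ‖x - y‖ := by ring

def ConvexEReal (r : E → EReal) : Prop :=
  ∀ x y : E, ∀ t : ℝ, 0 ≤ t → t ≤ 1 →
    r (t • x + (1 - t) • y) ≤ (t : EReal) * r x + ((1 - t : ℝ) : EReal) * r y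

/-- `p = prox^T_r a`. -/
def IsProxPoint (r : E → EReal) (T : E →L[ℝ] E) (a p : E) : Prop :=
  ∀ y, r p + (((1 : ℝ) / 2 * ⟪a - p, T (a - p)⟫ : ℝ) : EReal)
    ≤ r y + (((1 : ℝ) / 2 * ⟪a - y, T (a - y)⟫ : ℝ) : EReal)

namespace IsProxPoint

variable {r : E → EReal} {T : E →L[ℝ] E} {a b p q : E}

theorem ne_top (hp : IsProxPoint r T a p) {y : E} (hy : r y ≠ ⊤) : r p ≠ ⊤ :=
  EReal.ne_top_of_add_coe_le_add_coe (hp y) hy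

theorem inner_le_toReal_sub (hr : ConvexEReal r) (hbot : ∀ x, r x ≠ ⊥)
    (hT : (T : E →ₗ[ℝ] E).IsSymmetric) (hp : IsProxPoint r T a p) {y : E} (hy : r y ≠ ⊤) :
    ⟪a - p, T (y - p)⟫ ≤ (r y).toReal - (r p).toReal := by
  obtain ⟨rp, hrp⟩ : ∃ c : ℝ, r p = c := ⟨_, (EReal.coe_toReal (hp.ne_top hy) (hbot p)).symm⟩
  obtain ⟨ry, hry⟩ : ∃ c : ℝ, r y = c := ⟨_, (EReal.coe_toReal hy (hbot y)).symm⟩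
  rw [hrp, hry, EReal.toReal_coe, EReal.toReal_coe]
  set C := ⟪y - p, T (y - p)⟫ / 2
  have hseg : ∀ t : ℝ, 0 < t → t ≤ 1 → ⟪a - p, T (y - p)⟫ - (ry - rp) ≤ t * C := by
    intro t ht0 ht1
    have hc := hr y p t ht0.le ht1
    have hm := hp (t • y + (1 - t) • p)
    rw [hrp, hry] at hc
    rw [hrp] at hm
    have hm' : ((rp + 1 / 2 * ⟪a - p, T (a - p)⟫ : ℝ) : EReal) ≤
        ((t * ry + (1 - t) * rp + 1 / 2 * ⟪(a - p) - t • (y - p), T ((a - p) - t • (y - p))⟫ : ℝ)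
          : EReal) := by
      rw [show (a - p) - t • (y - p) = a - (t • y + (1 - t) • p) by module]
      exact_mod_cast hm.trans (add_le_add_left hc _)
    rw [EReal.coe_le_coe_iff, hT.inner_sub_smul_map_sub_smul] at hm'
    have hscaled : t * (⟪a - p, T (y - p)⟫ - (ry - rp)) ≤ t * (t * C) := by
      simp only [C]; linarith
    exact le_of_mul_le_mul_left hscaled ht0
  have hlim : Tendsto (fun t : ℝ => t * C) (𝓝[>] 0) (𝓝 0) := by
    simpa using ((continuous_mul_const C).tendsto 0).mono_left nhdsWithin_le_nhds
  have hle := ge_of_tendsto hlim (by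
    filter_upwards [Ioc_mem_nhdsGT one_pos] with t ht using hseg t ht.1 ht.2)
  linarith

theorem inner_map_sub_le (hr : ConvexEReal r) (hbot : ∀ x, r x ≠ ⊥) (hproper : ∃ x, r x ≠ ⊤)
    (hT : (T : E →ₗ[ℝ] E).IsSymmetric) (hp : IsProxPoint r T a p) (hq : IsProxPoint r T b q) :
    ⟪p - q, T (p - q)⟫ ≤ ⟪a - b, T (p - q)⟫ := by
  obtain ⟨x₀, hx₀⟩ := hproper
  have hpq := hp.inner_le_toReal_sub hr hbot hT (hq.ne_top hx₀)
  have hqp := hq.inner_le_toReal_sub hr hbot hT (hp.ne_top hx₀)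
  rw [← neg_sub p q, map_neg, inner_neg_right] at hpq
  have e : ⟪a - b, T (p - q)⟫ - ⟪p - q, T (p - q)⟫
      = ⟪a - p, T (p - q)⟫ - ⟪b - q, T (p - q)⟫ := by
    rw [← inner_sub_left, ← inner_sub_left]; congr 1; abel
  linarith

theorem norm_sub_le (hr : ConvexEReal r) (hbot : ∀ x, r x ≠ ⊥) (hproper : ∃ x, r x ≠ ⊤)
    (hT : (T : E →ₗ[ℝ] E).IsSymmetric) {lm lM : ℝ} (hlm : 0 < lm)
    (hlow : ∀ u, lm * ‖u‖ ^ 2 ≤ ⟪u, T u⟫)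
    (hupp : ∀ u, ⟪u, T u⟫ ≤ lM * ‖u‖ ^ 2) (hp : IsProxPoint r T a p)
    (hq : IsProxPoint r T b q) : ‖p - q‖ ≤ √(lm⁻¹ * lM) * ‖a - b‖ := by
  have hpos : ∀ u, 0 ≤ ⟪u, T u⟫ := fun u => le_trans (by positivity) (hlow u)
  have hQ := hT.inner_map_self_le_of_inner_map_le hpos (hp.inner_map_sub_le hr hbot hproper hT hq)
  exact le_sqrt_inv_mul_mul_of_mul_sq_le hlm (norm_nonneg _) ((hlow _).trans (hQ.trans (hupp _)))

end IsProxPoint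

end

theorem stmt5_general (n : ℕ)
    (gradf : EuclideanSpace ℝ (Fin n) → EuclideanSpace ℝ (Fin n))
    (L : ℝ)
    (hlip : ∀ x y, ‖gradf x - gradf y‖ ≤ L * ‖x - y‖)
    (r : EuclideanSpace ℝ (Fin n) → EReal)
    (hconv : ∀ x y : EuclideanSpace ℝ (Fin n), ∀ t : ℝ, 0 ≤ t → t ≤ 1 →
      r (t • x + (1 - t) • y) ≤ (t : EReal) * r x + ((1 - t : ℝ) : EReal) * r y)
    (hproper₁ : ∃ x, r x ≠ ⊤) (hproper₂ : ∀ x, r x ≠ ⊥)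
    (Λ Λinv : EuclideanSpace ℝ (Fin n) →L[ℝ] EuclideanSpace ℝ (Fin n))
    (hsymm : ∀ u v, ⟪Λ u, v⟫ = ⟪u, Λ v⟫)
    (hΛinv : ∀ u, Λ (Λinv u) = u ∧ Λinv (Λ u) = u)
    (lm lM : ℝ) (hlm : 0 < lm)
    (hlow : ∀ u, lm * ‖u‖ ^ 2 ≤ ⟪u, Λ u⟫)
    (hupp : ∀ u, ⟪u, Λ u⟫ ≤ lM * ‖u‖ ^ 2)
    (prox : EuclideanSpace ℝ (Fin n) → EuclideanSpace ℝ (Fin n))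
    (hprox : ∀ x y, r (prox x) + (((1 : ℝ) / 2 * ⟪x - prox x, Λ (x - prox x)⟫ : ℝ) : EReal)
        ≤ r y + (((1 : ℝ) / 2 * ⟪x - y, Λ (x - y)⟫ : ℝ) : EReal)) :
    ∀ x y, ‖(x - prox (x - Λinv (gradf x))) - (y - prox (y - Λinv (gradf y)))‖ ≤
      (1 + Real.sqrt (lm⁻¹ * lM) + L * Real.sqrt ((lm ^ 3)⁻¹ * lM)) * ‖x - y‖ := by
  intro x y
  set a := x - Λinv (gradf x)
  set b := y - Λinv (gradf y)
  have hΛinv_le (w) : ‖Λinv w‖ ≤ lm⁻¹ * ‖w‖ := by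
    rw [le_inv_mul_iff₀ hlm]
    simpa only [(hΛinv w).1] using mul_norm_le_norm_map hlow (Λinv w)
  have hab : ‖a - b‖ ≤ (1 + lm⁻¹ * L) * ‖x - y‖ :=
    norm_sub_map_sub_sub_map_le (inv_nonneg.2 hlm.le) hΛinv_le hlip x y
  have hpq : ‖prox a - prox b‖ ≤ √(lm⁻¹ * lM) * ‖a - b‖ :=
    IsProxPoint.norm_sub_le hconv hproper₂ hproper₁ hsymm hlm hlow hupp (hprox a)
      (hprox b)
  have hsqrt : √((lm ^ 3)⁻¹ * lM) = lm⁻¹ * √(lm⁻¹ * lM) := by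
    rw [show (lm ^ 3)⁻¹ * lM = lm⁻¹ ^ 2 * (lm⁻¹ * lM) by ring, Real.sqrt_mul (by positivity),
      Real.sqrt_sq (by positivity)]
  calc ‖(x - prox a) - (y - prox b)‖ = ‖(x - y) - (prox a - prox b)‖ := by congr 1; abel
    _ ≤ ‖x - y‖ + √(lm⁻¹ * lM) * ((1 + lm⁻¹ * L) * ‖x - y‖) :=
        (norm_sub_le _ _).trans (by gcongr; exact hpq.trans (by gcongr))
    _ = _ := by rw [hsqrt]; ring

/-- the natural residual `F^Λ(x) = x - prox^Λ_r (x - Λ⁻¹ ∇f(x))`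
is Lipschitz with modulus `1 + (λ_m⁻¹ λ_M)^(1/2) + L (λ_m⁻³ λ_M)^(1/2)` when
`∇f` is `L`-Lipschitz and `λ_M I ⪰ Λ ⪰ λ_m I`. -/
theorem stmt5 (n : ℕ) (f : EuclideanSpace ℝ (Fin n) → ℝ)
    (gradf : EuclideanSpace ℝ (Fin n) → EuclideanSpace ℝ (Fin n))
    (hgrad : ∀ x, HasGradientAt f (gradf x) x)
    (L : ℝ) (hL : 0 ≤ L)
    (hlip : ∀ x y, ‖gradf x - gradf y‖ ≤ L * ‖x - y‖)
    (r : EuclideanSpace ℝ (Fin n) → EReal)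
    (hconv : ∀ x y : EuclideanSpace ℝ (Fin n), ∀ t : ℝ, 0 ≤ t → t ≤ 1 →
      r (t • x + (1 - t) • y) ≤ (t : EReal) * r x + ((1 - t : ℝ) : EReal) * r y)
    (hlsc : LowerSemicontinuous r)
    (hproper₁ : ∃ x, r x ≠ ⊤) (hproper₂ : ∀ x, r x ≠ ⊥)
    (Λ Λinv : EuclideanSpace ℝ (Fin n) →L[ℝ] EuclideanSpace ℝ (Fin n))
    (hsymm : ∀ u v, ⟪Λ u, v⟫ = ⟪u, Λ v⟫)
    (hΛinv : ∀ u, Λ (Λinv u) = u ∧ Λinv (Λ u) = u)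
    (lm lM : ℝ) (hlm : 0 < lm) (hlmM : lm ≤ lM)
    (hlow : ∀ u, lm * ‖u‖ ^ 2 ≤ ⟪u, Λ u⟫)
    (hupp : ∀ u, ⟪u, Λ u⟫ ≤ lM * ‖u‖ ^ 2)
    (prox : EuclideanSpace ℝ (Fin n) → EuclideanSpace ℝ (Fin n))
    (hprox : ∀ x y, r (prox x) + (((1 : ℝ) / 2 * ⟪x - prox x, Λ (x - prox x)⟫ : ℝ) : EReal)
        ≤ r y + (((1 : ℝ) / 2 * ⟪x - y, Λ (x - y)⟫ : ℝ) : EReal)) :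
    ∀ x y, ‖(x - prox (x - Λinv (gradf x))) - (y - prox (y - Λinv (gradf y)))‖ ≤
      (1 + Real.sqrt (lm⁻¹ * lM) + L * Real.sqrt ((lm ^ 3)⁻¹ * lM)) * ‖x - y‖ :=
  stmt5_general n gradf L hlip r hconv hproper₁ hproper₂ Λ Λinv hsymm hΛinv lm lM hlm hlow hupp prox
    hprox
end

section
/- Let $\Lambda \in \mathbb{S}^n_{++}$ and $D \in \mathbb{R}^{n\times n}$ be such that $\Lambda D$ and $\Lambda(I - D)$ are both symmetric positive semidefinite. Then $\langle Dh, \Lambda(I-D)h\rangle \ge 0$ for all $h \in \mathbb{R}^n$. -/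
/-!
Write `A = ΛD` and `B = Λ(I - D)`. Since `Λ = A + B` is self-adjoint, self-adjointness of `A`
gives `DᴴΛ = ΛD`, and expanding then yields `DᴴB = DᴴBD + (I - D)ᴴA(I - D)`, a sum of positive
semidefinite matrices; the claim is the quadratic form of `DᴴB` at `h`.
-/

open Matrix

theorem IsSelfAdjoint.star_mul_mul_one_sub_eq {R : Type*} [Ring R] [StarRing R] {L D : R}
    (hA : IsSelfAdjoint (L * D)) (hB : IsSelfAdjoint (L * (1 - D))) :
    star D * (L * (1 - D)) = star D * (L * (1 - D)) * D + star (1 - D) * (L * D) * (1 - D) := by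
  have hL : IsSelfAdjoint L := by simpa [mul_sub] using hA.add hB
  have hDL : star D * L = L * D := by rw [← hA.star_eq, star_mul, hL.star_eq]
  simp only [star_sub, star_one, mul_sub, sub_mul, mul_one, one_mul, ← mul_assoc, hDL]
  noncomm_ring

theorem Matrix.PosSemidef.conjTranspose_mul_mul_one_sub {n R : Type*} [Fintype n] [DecidableEq n]
    [CommRing R] [PartialOrder R] [StarRing R] [AddLeftMono R] {Λ D : Matrix n n R}
    (hA : (Λ * D).PosSemidef) (hB : (Λ * (1 - D)).PosSemidef) :
    (Dᴴ * (Λ * (1 - D))).PosSemidef := by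
  rw [← star_eq_conjTranspose, IsSelfAdjoint.star_mul_mul_one_sub_eq hA.isHermitian hB.isHermitian]
  exact (hB.conjTranspose_mul_mul_same D).add (hA.conjTranspose_mul_mul_same (1 - D))

theorem stmt14_general (n : ℕ) (Λ D : Matrix (Fin n) (Fin n) ℝ)
    (h1 : (Λ * D).PosSemidef) (h2 : (Λ * (1 - D)).PosSemidef) :
    ∀ h : Fin n → ℝ,
      0 ≤ dotProduct (D.mulVec h) ((Λ * (1 - D)).mulVec h) := by
  intro h
  simpa only [star_trivial, conjTranspose_eq_transpose_of_trivial, ← mulVec_mulVec,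
    dotProduct_mulVec h, vecMul_transpose] using
    (h1.conjTranspose_mul_mul_one_sub h2).dotProduct_mulVec_nonneg h

/-- if `Λ` is symmetric positive definite and both `ΛD` and
`Λ(I - D)` are symmetric positive semidefinite, then
`⟪Dh, Λ(I-D)h⟫ ≥ 0` for all `h`. -/
theorem stmt14 (n : ℕ) (Λ D : Matrix (Fin n) (Fin n) ℝ)
    (hΛ : Λ.PosDef) (h1 : (Λ * D).PosSemidef) (h2 : (Λ * (1 - D)).PosSemidef) :
    ∀ h : Fin n → ℝ,
      0 ≤ dotProduct (D.mulVec h) ((Λ * (1 - D)).mulVec h) :=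
  stmt14_general n Λ D h1 h2
end

section
/- Let $\Lambda \in \mathbb{S}^n_{++}$ and $D \in \mathbb{R}^{n\times n}$ with $\Lambda D$ symmetric positive semidefinite. Then $\|D\Lambda^{-1}\| \le \|\Lambda^{-1}\|$ in the spectral norm. -/
/-!
Write `M = D Λ⁻¹`. Since `M = Λ⁻¹ (Λ D) Λ⁻¹` and `Λ⁻¹ - M = Λ⁻¹ (Λ (I - D)) Λ⁻¹` are congruences
by the symmetric `Λ⁻¹`, positivity of `Λ D` and `Λ (I - D)` gives `0 ≤ M ≤ Λ⁻¹` in the Loewner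
order. For a positive operator the norm is the supremum of its Rayleigh quotient, which is monotone
in the Loewner order, so `‖M‖ ≤ ‖Λ⁻¹‖`.
-/

open scoped RealInnerProductSpace

namespace ContinuousLinearMap

open scoped ComplexOrder

variable {𝕜 E : Type*} [RCLike 𝕜] [NormedAddCommGroup E] [InnerProductSpace 𝕜 E]

theorem rayleighQuotient_le_of_le {T S : E →L[𝕜] E} (hTS : T ≤ S) (x : E) :
    T.rayleighQuotient x ≤ S.rayleighQuotient x := by
  have hdiff : 0 ≤ (S - T).rayleighQuotient x :=
    div_nonneg (((le_def T S).1 hTS).2 x) (sq_nonneg _)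
  simpa [← rayleighQuotient_add] using add_le_add_left hdiff (T.rayleighQuotient x)

theorem norm_le_norm_of_nonneg_of_le {T S : E →L[𝕜] E} (hT : 0 ≤ T) (hTS : T ≤ S) :
    ‖T‖ ≤ ‖S‖ := by
  rw [nonneg_iff_isPositive] at hT
  rw [T.norm_eq_iSup_rayleighQuotient hT.isSymmetric]
  refine ciSup_le fun x => ?_
  calc |T.rayleighQuotient x| = T.rayleighQuotient x :=
        abs_of_nonneg (div_nonneg (hT.2 x) (sq_nonneg _))
    _ ≤ S.rayleighQuotient x := rayleighQuotient_le_of_le hTS x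
    _ ≤ |S.rayleighQuotient x| := le_abs_self _
    _ ≤ ‖S‖ := S.rayleighQuotient_le_norm x

theorem isPositive_comp_of_rightInverse {Λ Λinv B : E →L[𝕜] E}
    (hΛ : (Λ : E →ₗ[𝕜] E).IsSymmetric) (hinv : Function.RightInverse Λinv Λ)
    (hΛB : (Λ ∘L B).IsPositive) : (B ∘L Λinv).IsPositive := by
  rw [isPositive_iff] at hΛB ⊢
  refine ⟨fun u v => ?_, fun u => ?_⟩
  · calc inner 𝕜 (B (Λinv u)) v = inner 𝕜 (B (Λinv u)) (Λ (Λinv v)) := by rw [hinv v]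
      _ = inner 𝕜 (Λ (B (Λinv u))) (Λinv v) := (hΛ _ _).symm
      _ = inner 𝕜 (Λinv u) (Λ (B (Λinv v))) := hΛB.1 _ _
      _ = inner 𝕜 (Λ (Λinv u)) (B (Λinv v)) := (hΛ _ _).symm
      _ = inner 𝕜 u (B (Λinv v)) := by rw [hinv u]
  · calc (0 : 𝕜) ≤ inner 𝕜 (Λ (B (Λinv u))) (Λinv u) := hΛB.2 _
      _ = inner 𝕜 (B (Λinv u)) (Λ (Λinv u)) := hΛ _ _
      _ = inner 𝕜 (B (Λinv u)) u := by rw [hinv u]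

end ContinuousLinearMap

open ContinuousLinearMap in
theorem stmt15_general (n : ℕ)
    (Λ D Λinv : EuclideanSpace ℝ (Fin n) →L[ℝ] EuclideanSpace ℝ (Fin n))
    (hsymm : ∀ u v, ⟪Λ u, v⟫ = ⟪u, Λ v⟫)
    (hinv : ∀ u, Λ (Λinv u) = u ∧ Λinv (Λ u) = u)
    (hΛDsymm : ∀ u v, ⟪Λ (D u), v⟫ = ⟪u, Λ (D v)⟫)
    (hΛDpsd : ∀ u, 0 ≤ ⟪u, Λ (D u)⟫)
    (hΛIDsymm : ∀ u v, ⟪Λ (u - D u), v⟫ = ⟪u, Λ (v - D v)⟫)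
    (hΛIDpsd : ∀ u, 0 ≤ ⟪u, Λ (u - D u)⟫) :
    ‖D.comp Λinv‖ ≤ ‖Λinv‖ := by
  have hright : Function.RightInverse Λinv Λ := fun u => (hinv u).1
  have hΛD : (Λ ∘L D).IsPositive :=
    (isPositive_iff _).2 ⟨hΛDsymm, fun u => by simpa [real_inner_comm] using hΛDpsd u⟩
  have hΛID : (Λ ∘L (1 - D)).IsPositive :=
    (isPositive_iff _).2 ⟨fun u v => by simpa using hΛIDsymm u v,
      fun u => by simpa [real_inner_comm] using hΛIDpsd u⟩
  refine norm_le_norm_of_nonneg_of_le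
    ((nonneg_iff_isPositive _).2 (isPositive_comp_of_rightInverse hsymm hright hΛD)) ?_
  simpa [le_def, sub_comp, one_def, id_comp] using isPositive_comp_of_rightInverse hsymm hright hΛID

/-- if `Λ` is symmetric positive definite and `ΛD` (and
`Λ(I - D)`) are symmetric positive semidefinite, then `‖D Λ⁻¹‖ ≤ ‖Λ⁻¹‖` in the
operator (spectral) norm. -/
theorem stmt15 (n : ℕ)
    (Λ D Λinv : EuclideanSpace ℝ (Fin n) →L[ℝ] EuclideanSpace ℝ (Fin n))
    (hsymm : ∀ u v, ⟪Λ u, v⟫ = ⟪u, Λ v⟫)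
    (hpos : ∀ u, u ≠ 0 → 0 < ⟪u, Λ u⟫)
    (hinv : ∀ u, Λ (Λinv u) = u ∧ Λinv (Λ u) = u)
    (hΛDsymm : ∀ u v, ⟪Λ (D u), v⟫ = ⟪u, Λ (D v)⟫)
    (hΛDpsd : ∀ u, 0 ≤ ⟪u, Λ (D u)⟫)
    (hΛIDsymm : ∀ u v, ⟪Λ (u - D u), v⟫ = ⟪u, Λ (v - D v)⟫)
    (hΛIDpsd : ∀ u, 0 ≤ ⟪u, Λ (u - D u)⟫) :
    ‖D.comp Λinv‖ ≤ ‖Λinv‖ :=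
  stmt15_general n Λ D Λinv hsymm hinv hΛDsymm hΛDpsd hΛIDsymm hΛIDpsd
end

section
/- Let $X$ be a symmetric $n\times n$ matrix. Then $e^X \preceq X + \exp(9X^2/16)$ and $e^X \preceq e^{\|X\|}\cdot I$ in the semidefinite (Loewner) order, where $e^X$, $\exp(9X^2/16)$ are matrix exponentials and $\|X\|$ is the spectral norm. -/
open scoped RealInnerProductSpace

/-!
Diagonalise `X` in an orthonormal eigenbasis `(bᵢ)` with eigenvalues `μᵢ`. Sums, products and
power series of `X` act on `bᵢ` by the corresponding scalar function of `μᵢ`, so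
`⟪u, A u⟫ = ∑ aᵢ ⟪bᵢ, u⟫²` reduces both Loewner inequalities to the scalar inequalities
`eᵗ ≤ t + exp (9t²/16)` and `eᵗ ≤ e^{|t|}`, applied at `t = μᵢ`, with `|μᵢ| ≤ ‖X‖`.

The first scalar inequality is trivial for `t ≥ 16/9` (then `t ≤ 9t²/16`), follows from
`eᵗ ≤ 1 + t + t²/2` for `t ≤ 0`, and is tight on `(0, 16/9)`, where it is checked by squaring a
sixth-order Taylor bound for `e^{t/2}` against a fourth-order lower bound for `exp (9t²/16)`.
-/

namespace Real

lemma exp_le_quadratic_of_nonpos {t : ℝ} (ht : t ≤ 0) : exp t ≤ 1 + t + t ^ 2 / 2 := by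
  have hpos : 0 < 1 - t + t ^ 2 / 2 := by nlinarith
  have hinv : exp t * (1 - t + t ^ 2 / 2) ≤ 1 := by
    calc exp t * (1 - t + t ^ 2 / 2) ≤ exp t * exp (-t) := by
          gcongr; simpa [sub_eq_add_neg] using quadratic_le_exp_of_nonneg (neg_nonneg.2 ht)
      _ = 1 := by rw [← exp_add, add_neg_cancel, exp_zero]
  -- `(1 + t + t²/2)(1 - t + t²/2) = 1 + t⁴/4`
  rw [← mul_le_mul_iff_left₀ hpos]
  nlinarith [pow_nonneg (sq_nonneg t) 2]

lemma quartic_le_exp_of_nonneg {x : ℝ} (hx : 0 ≤ x) :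
    1 + x + x ^ 2 / 2 + x ^ 3 / 6 + x ^ 4 / 24 ≤ exp x := by
  have := sum_le_exp_of_nonneg hx 5
  norm_num [Finset.sum_range_succ, Nat.factorial] at this
  linarith

lemma exp_le_sextic_of_mem_Icc {x : ℝ} (h0 : 0 ≤ x) (h1 : x ≤ 1) :
    exp x ≤ 1 + x + x ^ 2 / 2 + x ^ 3 / 6 + x ^ 4 / 24 + x ^ 5 / 120 + 7 * x ^ 6 / 4320 := by
  have := exp_bound' h0 h1 (n := 6) (by norm_num)
  norm_num [Finset.sum_range_succ, Nat.factorial] at this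
  linarith

end Real

open Real

lemma sq_sextic_le_add_quartic {t : ℝ} (h0 : 0 ≤ t) (h1 : t ≤ 16 / 9) :
    (1 + t / 2 + (t / 2) ^ 2 / 2 + (t / 2) ^ 3 / 6 + (t / 2) ^ 4 / 24 + (t / 2) ^ 5 / 120
        + 7 * (t / 2) ^ 6 / 4320) ^ 2
      ≤ t + (1 + 9 / 16 * t ^ 2 + (9 / 16 * t ^ 2) ^ 2 / 2 + (9 / 16 * t ^ 2) ^ 3 / 6
        + (9 / 16 * t ^ 2) ^ 4 / 24) := by
  -- the difference of the two sides is `t²` times this polynomial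
  have hq : 0 ≤ 1/16 - t/6 + 179/1536*t^2 - 1/120*t^3 + 31261/1105920*t^4 - 11/55296*t^5
      + 293549/70778880*t^6 - 1/414720*t^7 - 53/265420800*t^8 - 7/530841600*t^9
      - 49/76441190400*t^10 := by
    nlinarith [sq_nonneg (t - 128/179), sq_nonneg (t^2 - t), sq_nonneg (t^3 - t^2),
      sq_nonneg (t^4 - t^3), sq_nonneg (t^5 - t^4), mul_nonneg h0 (sub_nonneg.2 h1),
      pow_nonneg h0 6, pow_nonneg h0 8, pow_nonneg h0 10,
      mul_nonneg (mul_nonneg h0 h0) (sub_nonneg.2 h1), sq_nonneg (t - 1)]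
  nlinarith [mul_nonneg (sq_nonneg t) hq]

lemma exp_le_add_exp_sq_of_mem_Icc {t : ℝ} (h0 : 0 ≤ t) (h1 : t ≤ 16 / 9) :
    exp t ≤ t + exp (9 / 16 * t ^ 2) := by
  calc exp t = exp (t / 2) ^ 2 := by rw [← exp_nat_mul]; ring_nf
    _ ≤ _ := pow_le_pow_left₀ (exp_nonneg _)
        (exp_le_sextic_of_mem_Icc (by positivity) (by linarith)) 2
    _ ≤ _ := sq_sextic_le_add_quartic h0 h1
    _ ≤ t + exp (9 / 16 * t ^ 2) := by
        linarith [quartic_le_exp_of_nonneg (x := 9 / 16 * t ^ 2) (by positivity)]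

lemma exp_le_add_exp_sq (t : ℝ) : exp t ≤ t + exp (9 / 16 * t ^ 2) := by
  rcases le_total t 0 with hneg | hpos
  · nlinarith [exp_le_quadratic_of_nonpos hneg, add_one_le_exp (9 / 16 * t ^ 2)]
  rcases le_total t (16 / 9) with hsmall | hlarge
  · exact exp_le_add_exp_sq_of_mem_Icc hpos hsmall
  · have : exp t ≤ exp (9 / 16 * t ^ 2) := exp_le_exp.2 (by nlinarith)
    linarith

namespace ContinuousLinearMap

variable {𝕜 E : Type*} [RCLike 𝕜] [NormedAddCommGroup E] [NormedSpace 𝕜 E]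

lemma pow_apply_of_apply_eq_smul {A : E →L[𝕜] E} {u : E} {c : 𝕜} (h : A u = c • u) (k : ℕ) :
    (A ^ k) u = c ^ k • u := by
  induction k with
  | zero => simp
  | succ k ih => rw [pow_succ', mul_apply_eq_comp, ih, map_smul, h, smul_smul, pow_succ]

lemma exp_apply_of_apply_eq_smul [CompleteSpace E] {A : E →L[𝕜] E} {u : E} {c : 𝕜}
    (h : A u = c • u) : NormedSpace.exp A u = NormedSpace.exp c • u := by
  have hA := (NormedSpace.exp_series_hasSum_exp' (𝕂 := 𝕜) A).mapL (apply 𝕜 E u)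
  have hc := (NormedSpace.exp_series_hasSum_exp' (𝕂 := 𝕜) c).smul_const u
  refine hA.unique (hc.congr_fun fun k => ?_)
  simp only [apply_apply, smul_apply, pow_apply_of_apply_eq_smul h, smul_smul,
    smul_eq_mul]

lemma norm_le_opNorm_of_apply_eq_smul {A : E →L[𝕜] E} {u : E} {c : 𝕜} (hu : ‖u‖ = 1)
    (h : A u = c • u) : ‖c‖ ≤ ‖A‖ := by
  simpa [h, norm_smul, hu] using A.le_opNorm u

end ContinuousLinearMap

namespace OrthonormalBasis

variable {ι E : Type*} [Fintype ι] [NormedAddCommGroup E] [InnerProductSpace ℝ E]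
  (b : OrthonormalBasis ι ℝ E)

lemma inner_apply_self_eq_sum {A : E →L[ℝ] E} {a : ι → ℝ} (hA : ∀ i, A (b i) = a i • b i)
    (u : E) : ⟪u, A u⟫ = ∑ i, a i * ⟪b i, u⟫ ^ 2 := by
  have hAu : A u = ∑ i, (⟪b i, u⟫ * a i) • b i := by
    conv_lhs => rw [← b.sum_repr' u]
    simp only [map_sum, map_smul, hA, smul_smul]
  simp only [hAu, inner_sum, real_inner_smul_right]
  exact Finset.sum_congr rfl fun i _ => by rw [real_inner_comm]; ring

lemma inner_apply_self_le {A B : E →L[ℝ] E} {a c : ι → ℝ} (hA : ∀ i, A (b i) = a i • b i)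
    (hB : ∀ i, B (b i) = c i • b i) (hac : ∀ i, a i ≤ c i) (u : E) : ⟪u, A u⟫ ≤ ⟪u, B u⟫ := by
  rw [b.inner_apply_self_eq_sum hA, b.inner_apply_self_eq_sum hB]
  gcongr with i
  exact hac i

end OrthonormalBasis

open ContinuousLinearMap in
/-- for a symmetric operator `X` on `ℝ^n`,
`e^X ⪯ X + exp(9X²/16)` and `e^X ⪯ e^{‖X‖} · I` in the Loewner order (the
Loewner order `A ⪯ B` is expressed via `⟪u, A u⟫ ≤ ⟪u, B u⟫` for all `u`),
with `‖X‖` the operator (spectral) norm. -/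
theorem stmt17 (n : ℕ)
    (X : EuclideanSpace ℝ (Fin n) →L[ℝ] EuclideanSpace ℝ (Fin n))
    (hX : ∀ u v, ⟪X u, v⟫ = ⟪u, X v⟫) :
    (∀ u, ⟪u, NormedSpace.exp X u⟫ ≤
        ⟪u, (X + NormedSpace.exp (((9 : ℝ) / 16) • (X * X))) u⟫) ∧
    (∀ u, ⟪u, NormedSpace.exp X u⟫ ≤ Real.exp ‖X‖ * ‖u‖ ^ 2) := by
  have hsym : (X : EuclideanSpace ℝ (Fin n) →ₗ[ℝ] _).IsSymmetric := hX
  set b := hsym.eigenvectorBasis finrank_euclideanSpace_fin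
  set μ := hsym.eigenvalues finrank_euclideanSpace_fin
  have hX_b (i) : X (b i) = μ i • b i := hsym.apply_eigenvectorBasis _ i
  have hsq_b (i) : ((9 / 16 : ℝ) • (X * X)) (b i) = (9 / 16 * μ i ^ 2) • b i := by
    rw [smul_apply, mul_apply_eq_comp, hX_b, map_smul, hX_b, smul_smul, smul_smul]
    ring_nf
  have hexp_b {A : EuclideanSpace ℝ (Fin n) →L[ℝ] _} {c : Fin n → ℝ}
      (h : ∀ i, A (b i) = c i • b i) (i) : NormedSpace.exp A (b i) = exp (c i) • b i := by
    rw [exp_apply_of_apply_eq_smul (h i), exp_eq_exp_ℝ]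
  constructor
  · refine b.inner_apply_self_le (hexp_b hX_b) (fun i => ?_)
      (fun i => exp_le_add_exp_sq (μ i))
    rw [add_apply, hX_b, hexp_b hsq_b, ← add_smul]
  · intro u
    have hμ (i) : μ i ≤ ‖X‖ :=
      (le_abs_self _).trans (norm_le_opNorm_of_apply_eq_smul (b.orthonormal.1 i) (hX_b i))
    simpa [real_inner_smul_right, real_inner_self_eq_norm_sq] using
      b.inner_apply_self_le (B := exp ‖X‖ • 1) (hexp_b hX_b)
        (fun i => by rw [smul_apply, one_apply_eq_self]) (fun i => exp_le_exp.2 (hμ i)) u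
end

section
/- Let $(a_k)$ be nonnegative reals and suppose there exist sequences $\vartheta_k \to 0$ and $\gamma_k \downarrow 0$ (non-increasing, positive) and index $\bar\ell$ such that $a_{k+1} \le \vartheta_k a_k + \gamma_k^{k-\bar\ell}$ for all large $k$. Then $(a_k)$ converges r-superlinearly to $0$: there exists a sequence $\tau_k \to 0$ with $a_k \le \tau_k$ and $\tau_{k+1}/\tau_k \to 0$. -/
private def Tseq (a θ q : ℕ → ℝ) (N : ℕ) : ℕ → ℝ
  | 0 => a N + q N
  | n+1 => (θ (N+n) + q (N+n)) * Tseq a θ q N n + q (N+n+1)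

/-- If a positive sequence eventually halves at each step, it tends to 0. -/
private lemma tendsto_zero_of_eventually_half (τ : ℕ → ℝ) (hpos : ∀ k, 0 < τ k)
    (h : ∀ᶠ k in Filter.atTop, τ (k + 1) ≤ τ k / 2) :
    Filter.Tendsto τ Filter.atTop (nhds 0) := by
  obtain ⟨M, hM⟩ := Filter.eventually_atTop.mp h
  have key : ∀ n, τ (M + n) ≤ τ M * (1/2)^n := by
    intro n
    induction n with
    | zero => simp
    | succ n ih =>
      have h1 : τ (M + n + 1) ≤ τ (M + n) / 2 := hM _ (Nat.le_add_right _ _)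
      calc τ (M + (n+1)) = τ (M + n + 1) := by ring_nf
        _ ≤ τ (M + n) / 2 := h1
        _ ≤ (τ M * (1/2)^n) / 2 := by linarith
        _ = τ M * (1/2)^(n+1) := by ring
  have hgeo : Filter.Tendsto (fun n : ℕ => τ M * (1/2 : ℝ)^n) Filter.atTop (nhds 0) := by
    have := tendsto_pow_atTop_nhds_zero_of_lt_one (by norm_num : (0:ℝ) ≤ 1/2) (by norm_num)
    simpa using this.const_mul (τ M)
  have hshift : Filter.Tendsto (fun n => τ (M + n)) Filter.atTop (nhds 0) := by
    refine squeeze_zero (fun n => (hpos _).le) (fun n => key n) hgeo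
  have : Filter.Tendsto (fun n => τ (n + M)) Filter.atTop (nhds 0) := by
    simpa [Nat.add_comm] using hshift
  exact (Filter.tendsto_add_atTop_iff_nat M).mp this

/-- if `a (k+1) ≤ ϑ k * a k + (γ k)^(k - ℓ̄)` for all large `k`,
with `ϑ k → 0` and `γ k ↓ 0` positive non-increasing, then `a` converges to `0`
r-superlinearly: there is a positive majorizing sequence `τ` with `a k ≤ τ k`,
`τ k → 0` and `τ (k+1) / τ k → 0`. -/
theorem stmt19 (a ϑ γ : ℕ → ℝ) (lbar : ℕ)
    (ha : ∀ k, 0 ≤ a k)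
    (hϑ : Filter.Tendsto ϑ Filter.atTop (nhds 0))
    (hγpos : ∀ k, 0 < γ k) (hγanti : Antitone γ)
    (hγ : Filter.Tendsto γ Filter.atTop (nhds 0))
    (hrec : ∀ᶠ k in Filter.atTop, a (k + 1) ≤ ϑ k * a k + γ k ^ (k - lbar)) :
    ∃ τ : ℕ → ℝ, (∀ k, a k ≤ τ k) ∧ (∀ k, 0 < τ k) ∧
      Filter.Tendsto τ Filter.atTop (nhds 0) ∧
      Filter.Tendsto (fun k => τ (k + 1) / τ k) Filter.atTop (nhds 0) := by
  classical
  set θ : ℕ → ℝ := fun k => |ϑ k| with hθdef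
  set g : ℕ → ℝ := fun k => Real.sqrt (γ k) with hgdef
  set q : ℕ → ℝ := fun k => g k ^ (k - lbar) with hqdef
  -- basic facts
  have hθ0 : ∀ k, 0 ≤ θ k := fun k => abs_nonneg _
  have hgpos : ∀ k, 0 < g k := fun k => Real.sqrt_pos.mpr (hγpos k)
  have hqpos : ∀ k, 0 < q k := fun k => pow_pos (hgpos k) _
  have hganti : Antitone g := fun i j hij => Real.sqrt_le_sqrt (hγanti hij)
  -- choose N
  obtain ⟨N₁, hN₁⟩ := Filter.eventually_atTop.mp hrec
  have hγ1 : ∀ᶠ k in Filter.atTop, γ k ≤ 1 := by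
    have := hγ.eventually (eventually_le_nhds (by norm_num : (0:ℝ) < 1))
    exact this
  obtain ⟨N₂, hN₂⟩ := Filter.eventually_atTop.mp hγ1
  set N : ℕ := max (max N₁ N₂) (lbar + 1) with hNdef
  have hNrec : ∀ k, N ≤ k → a (k + 1) ≤ ϑ k * a k + γ k ^ (k - lbar) := by
    intro k hk
    exact hN₁ k (le_trans (le_trans (le_max_left _ _) (le_max_left _ _)) hk)
  have hNγ1 : ∀ k, N ≤ k → γ k ≤ 1 := by
    intro k hk
    exact hN₂ k (le_trans (le_trans (le_max_right _ _) (le_max_left _ _)) hk)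
  have hNlbar : lbar + 1 ≤ N := le_max_right _ _
  have hg1 : ∀ k, N ≤ k → g k ≤ 1 := by
    intro k hk
    exact Real.sqrt_le_one.mpr (hNγ1 k hk)
  have hqg : ∀ k, N ≤ k → q k ≤ g k := by
    intro k hk
    have hexp : k - lbar ≠ 0 := by omega
    exact pow_le_of_le_one (hgpos k).le (hg1 k hk) hexp
  -- γ k ^ (k - lbar) = q k ^ 2
  have hγq : ∀ k, γ k ^ (k - lbar) = q k ^ 2 := by
    intro k
    have : g k ^ 2 = γ k := Real.sq_sqrt (hγpos k).le
    calc γ k ^ (k - lbar) = (g k ^ 2) ^ (k - lbar) := by rw [this]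
      _ = (g k ^ (k - lbar)) ^ 2 := by rw [← pow_mul, ← pow_mul, Nat.mul_comm]
      _ = q k ^ 2 := rfl
  -- q step
  have hqstep : ∀ k, N ≤ k → q (k + 1) ≤ g (k + 1) * q k := by
    intro k hk
    have h1 : k + 1 - lbar = (k - lbar) + 1 := by omega
    have h2 : g (k+1) ^ (k - lbar) ≤ g k ^ (k - lbar) :=
      pow_le_pow_left₀ (hgpos (k+1)).le (hganti (Nat.le_succ k)) _
    calc q (k+1) = g (k+1) ^ ((k - lbar) + 1) := by rw [hqdef]; simp only []; rw [h1]
      _ = g (k+1) * g (k+1) ^ (k - lbar) := by ring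
      _ ≤ g (k+1) * g k ^ (k - lbar) := by
          exact mul_le_mul_of_nonneg_left h2 (hgpos (k+1)).le
      _ = g (k+1) * q k := rfl
  -- the majorizing sequence
  set T : ℕ → ℝ := Tseq a θ q N with hTdef
  have hT0 : T 0 = a N + q N := rfl
  have hTsucc : ∀ n, T (n+1) = (θ (N+n) + q (N+n)) * T n + q (N+n+1) := fun n => rfl
  -- invariants
  have hinv : ∀ n, 0 < T n ∧ a (N+n) ≤ T n ∧ q (N+n) ≤ T n := by
    intro n
    induction n with
    | zero =>
      refine ⟨by rw [hT0]; have := hqpos N; have := ha N; linarith, ?_, ?_⟩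
      · simp only [Nat.add_zero, hT0]; linarith [(hqpos N)]
      · simp only [Nat.add_zero, hT0]; linarith [ha N]
    | succ n ih =>
      obtain ⟨hTpos, haT, hqT⟩ := ih
      have hfirst : 0 ≤ (θ (N+n) + q (N+n)) * T n := by positivity
      refine ⟨?_, ?_, ?_⟩
      · rw [hTsucc]; have := hqpos (N+n+1); linarith
      · have hrec' := hNrec (N+n) (Nat.le_add_right _ _)
        have h1 : ϑ (N+n) * a (N+n) ≤ θ (N+n) * T n := by
          calc ϑ (N+n) * a (N+n) ≤ |ϑ (N+n) * a (N+n)| := le_abs_self _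
            _ = θ (N+n) * |a (N+n)| := by rw [abs_mul]
            _ = θ (N+n) * a (N+n) := by rw [abs_of_nonneg (ha _)]
            _ ≤ θ (N+n) * T n := mul_le_mul_of_nonneg_left haT (hθ0 _)
        have h2 : γ (N+n) ^ (N+n - lbar) ≤ q (N+n) * T n := by
          rw [hγq]
          calc q (N+n) ^ 2 = q (N+n) * q (N+n) := sq (q (N+n)) ▸ by ring
            _ ≤ q (N+n) * T n := mul_le_mul_of_nonneg_left hqT (hqpos _).le
        have : a (N + n + 1) ≤ (θ (N+n) + q (N+n)) * T n := by
          calc a (N+n+1) ≤ ϑ (N+n) * a (N+n) + γ (N+n) ^ (N+n - lbar) := hrec'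
            _ ≤ θ (N+n) * T n + q (N+n) * T n := add_le_add h1 h2
            _ = (θ (N+n) + q (N+n)) * T n := by ring
        rw [hTsucc]
        calc a (N + (n+1)) = a (N + n + 1) := by ring_nf
          _ ≤ (θ (N+n) + q (N+n)) * T n := this
          _ ≤ (θ (N+n) + q (N+n)) * T n + q (N+n+1) := by linarith [(hqpos (N+n+1))]
      · rw [hTsucc]
        calc q (N + (n+1)) = q (N+n+1) := by ring_nf
          _ ≤ (θ (N+n) + q (N+n)) * T n + q (N+n+1) := by linarith
  -- define τ
  set τ : ℕ → ℝ := fun k => if k < N then a k + 1 else T (k - N) with hτdef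
  have hτpos : ∀ k, 0 < τ k := by
    intro k
    by_cases h : k < N
    · simp only [hτdef, if_pos h]; linarith [ha k]
    · simp only [hτdef, if_neg h]; exact (hinv (k - N)).1
  have hτmaj : ∀ k, a k ≤ τ k := by
    intro k
    by_cases h : k < N
    · simp only [hτdef, if_pos h]; linarith
    · simp only [hτdef, if_neg h]
      have : N + (k - N) = k := by omega
      have h2 := (hinv (k - N)).2.1
      rwa [this] at h2
  -- ratio bound
  have hratio : ∀ k, N ≤ k → τ (k+1) / τ k ≤ θ k + q k + g (k+1) := by
    intro k hk
    have h1 : ¬ (k < N) := by omega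
    have h2 : ¬ (k + 1 < N) := by omega
    have h3 : k + 1 - N = (k - N) + 1 := by omega
    have h4 : N + (k - N) = k := by omega
    have hTpos := (hinv (k - N)).1
    have hqT := (hinv (k - N)).2.2
    rw [h4] at hqT
    simp only [hτdef, if_neg h1, if_neg h2, h3, hTsucc, h4]
    rw [add_div]
    have hA : (θ k + q k) * T (k - N) / T (k - N) = θ k + q k := by
      field_simp
    rw [hA]
    have hB : q (k+1) / T (k - N) ≤ g (k+1) := by
      have hq1 : q (k+1) ≤ g (k+1) * q k := hqstep k hk
      have : q (k+1) / T (k - N) ≤ q (k+1) / q k :=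
        div_le_div_of_nonneg_left (hqpos (k+1)).le (hqpos k) hqT
      refine this.trans ?_
      rw [div_le_iff₀ (hqpos k)]
      linarith
    linarith
  -- the bounding sequence tends to 0
  have hθtend : Filter.Tendsto θ Filter.atTop (nhds 0) := by
    simpa using hϑ.abs
  have hgtend : Filter.Tendsto g Filter.atTop (nhds 0) := by
    have : Filter.Tendsto (fun k => Real.sqrt (γ k)) Filter.atTop (nhds (Real.sqrt 0)) :=
      (Real.continuous_sqrt.tendsto 0).comp hγ
    simpa using this
  have hqtend : Filter.Tendsto q Filter.atTop (nhds 0) := by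
    refine squeeze_zero' (Filter.Eventually.of_forall fun k => (hqpos k).le) ?_ hgtend
    filter_upwards [Filter.eventually_atTop.mpr ⟨N, fun k hk => hqg k hk⟩] with k hk using hk
  have hg1tend : Filter.Tendsto (fun k => g (k+1)) Filter.atTop (nhds 0) :=
    hgtend.comp (Filter.tendsto_add_atTop_nat 1)
  have hbound : Filter.Tendsto (fun k => θ k + q k + g (k+1)) Filter.atTop (nhds 0) := by
    have := (hθtend.add hqtend).add hg1tend
    simpa using this
  -- the ratio tends to 0
  have hratiotend : Filter.Tendsto (fun k => τ (k+1) / τ k) Filter.atTop (nhds 0) := by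
    refine squeeze_zero' ?_ ?_ hbound
    · filter_upwards with k
      exact div_nonneg (hτpos (k+1)).le (hτpos k).le
    · filter_upwards [Filter.eventually_atTop.mpr ⟨N, fun k hk => hratio k hk⟩] with k hk using hk
  -- τ tends to 0
  have hτtend : Filter.Tendsto τ Filter.atTop (nhds 0) := by
    apply tendsto_zero_of_eventually_half τ hτpos
    have hhalf := hratiotend.eventually (eventually_le_nhds (by norm_num : (0:ℝ) < 1/2))
    filter_upwards [hhalf] with k hk
    have := hτpos k
    rw [div_le_iff₀ this] at hk
    linarith
  exact ⟨τ, hτmaj, hτpos, hτtend, hratiotend⟩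
end
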